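/- (Equivalence of f-OTD reductions, paper's Theorem 1, finite-dimensional form.) Let (U, Y) be an f-OTD reduction with gauge Φ, let Φ̃ : ℝ → Matrix (Fin r) (Fin r) ℝ satisfy Φ̃(t)ᵀ = -Φ̃(t) for all t, and let R : ℝ → Matrix (Fin r) (Fin r) ℝ be differentiable with R'(t) = R(t)*Φ(t) - Φ̃(t)*R(t) and R(t)ᵀ*R(t) = R(t)*R(t)ᵀ = 1 for all t. Define Ũ(t) := U(t)*R(t)ᵀ and Ỹ(t) := Y(t)*R(t)ᵀ, so that U = Ũ*R and Y = Ỹ*R. Then (Ũ, Ỹ) is an f-OTD reduction with gauge Φ̃; moreover C̃(t) := Ỹ(t)ᵀ*Ỹ(t) = R(t)*C(t)*R(t)ᵀ is invertible and Ũ(t)*Ỹ(t)ᵀ = U(t)*Y(t)ᵀ for all t, i.e. the two reductions yield identical low-rank approximations. -/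

import Mathlib

open Matrix

/-- Finite-dimensional f-OTD setting (see paper, Section 2.2). -/

def FOTDReduction {n r d : ℕ}
    (L : ℝ → Matrix (Fin n) (Fin n) ℝ) (F : ℝ → Matrix (Fin n) (Fin d) ℝ)
    (U : ℝ → Matrix (Fin n) (Fin r) ℝ) (Y : ℝ → Matrix (Fin d) (Fin r) ℝ)
    (Φ : ℝ → Matrix (Fin r) (Fin r) ℝ) : Prop :=
  (∀ t : ℝ, (Φ t)ᵀ = -Φ t) ∧
  (∀ t : ℝ, IsUnit ((Y t)ᵀ * Y t).det) ∧
  (∀ (t : ℝ) (i : Fin n) (j : Fin r),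
    HasDerivAt (fun s => U s i j)
      (((L t * U t - U t * ((U t)ᵀ * L t * U t)
        + (1 - U t * (U t)ᵀ) * F t * Y t * ((Y t)ᵀ * Y t)⁻¹
        + U t * Φ t : Matrix (Fin n) (Fin r) ℝ)) i j) t) ∧
  (∀ (t : ℝ) (i : Fin d) (j : Fin r),
    HasDerivAt (fun s => Y s i j)
      (((Y t * ((U t)ᵀ * L t * U t)ᵀ + (F t)ᵀ * U t + Y t * Φ t
        : Matrix (Fin d) (Fin r) ℝ)) i j) t)

/-!
Replacing `(U, Y)` by `(U Rᵀ, Y Rᵀ)` with `R` orthogonal leaves `U Uᵀ` and `U Yᵀ` unchanged and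
conjugates `L_r`, `C` and `C⁻¹` by `R`. Hence the right-hand side of each f-OTD equation at
`(U Rᵀ, Y Rᵀ)` with gauge `Φ̃` is the old right-hand side times `Rᵀ` plus `U (R Φ - Φ̃ R)ᵀ`
(resp. `Y (R Φ - Φ̃ R)ᵀ`), which by `R' = R Φ - Φ̃ R` and the product rule is the derivative
of `U Rᵀ` (resp. `Y Rᵀ`).
-/

namespace Matrix

theorem hasDerivAt_mul_apply {𝕜 : Type*} [NontriviallyNormedField 𝕜] {l m p : Type*} [Fintype m]
    {A : 𝕜 → Matrix l m 𝕜} {A' : Matrix l m 𝕜} {B : 𝕜 → Matrix m p 𝕜} {B' : Matrix m p 𝕜}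
    {t : 𝕜} (hA : ∀ i j, HasDerivAt (fun s => A s i j) (A' i j) t)
    (hB : ∀ i j, HasDerivAt (fun s => B s i j) (B' i j) t) (i : l) (j : p) :
    HasDerivAt (fun s => (A s * B s) i j) ((A' * B t + A t * B') i j) t := by
  simpa [mul_apply, Finset.sum_add_distrib] using
    HasDerivAt.fun_sum fun k (_ : k ∈ Finset.univ) => (hA i k).mul (hB k j)

theorem hasDerivAt_mul_transpose_apply {𝕜 : Type*} [NontriviallyNormedField 𝕜] {l m : Type*}
    [Fintype m] {A : 𝕜 → Matrix l m 𝕜} {A' : Matrix l m 𝕜} {Q : 𝕜 → Matrix m m 𝕜}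
    {Q' : Matrix m m 𝕜} {t : 𝕜} (hA : ∀ i j, HasDerivAt (fun s => A s i j) (A' i j) t)
    (hQ : ∀ i j, HasDerivAt (fun s => Q s i j) (Q' i j) t) (i : l) (j : m) :
    HasDerivAt (fun s => (A s * (Q s)ᵀ) i j) ((A' * (Q t)ᵀ + A t * Q'ᵀ) i j) t :=
  hasDerivAt_mul_apply (B := fun s => (Q s)ᵀ) hA (fun i j => hQ j i) i j

variable {α : Type*} [CommRing α] {m n : Type*} [Fintype n] {Q : Matrix n n α}

theorem transpose_mul_mul_transpose [Fintype m] (A : Matrix m n α) (B : Matrix m m α) :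
    (A * Qᵀ)ᵀ * B * (A * Qᵀ) = Q * (Aᵀ * B * A) * Qᵀ := by
  simp only [transpose_mul, transpose_transpose, Matrix.mul_assoc]

theorem transpose_mul_self_mul_transpose [Fintype m] (A : Matrix m n α) :
    (A * Qᵀ)ᵀ * (A * Qᵀ) = Q * (Aᵀ * A) * Qᵀ := by
  simp only [transpose_mul, transpose_transpose, Matrix.mul_assoc]

variable [DecidableEq n]

theorem transpose_mul_cancel_left (hQ : Qᵀ * Q = 1) (A : Matrix n m α) : Qᵀ * (Q * A) = A := by
  rw [← Matrix.mul_assoc, hQ, Matrix.one_mul]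

theorem mul_transpose_mul_transpose_cancel {p : Type*} (hQ : Qᵀ * Q = 1) (A : Matrix m n α)
    (B : Matrix p n α) :
    A * Qᵀ * (B * Qᵀ)ᵀ = A * Bᵀ := by
  rw [transpose_mul, transpose_transpose, Matrix.mul_assoc, ← Matrix.mul_assoc Qᵀ, hQ,
    Matrix.one_mul]

theorem inv_conj_transpose (hQ : Qᵀ * Q = 1) (C : Matrix n n α) :
    (Q * C * Qᵀ)⁻¹ = Q * C⁻¹ * Qᵀ := by
  have hQT : Qᵀ⁻¹ = Q := inv_eq_left_inv (mul_eq_one_comm.mp hQ)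
  rw [mul_inv_rev, mul_inv_rev, inv_eq_left_inv hQ, hQT, Matrix.mul_assoc]

theorem det_conj_transpose (hQ : Qᵀ * Q = 1) (C : Matrix n n α) :
    (Q * C * Qᵀ).det = C.det := by
  rw [det_mul, det_mul, mul_right_comm, ← det_mul, mul_eq_one_comm.mp hQ, det_one, one_mul]

end Matrix

section Gauge

variable {α : Type*} [CommRing α] {n r d : Type*} [Fintype n] [Fintype r] [DecidableEq r]
  {L : Matrix n n α} {F : Matrix n d α} {U : Matrix n r α} {Y : Matrix d r α}
  {Q Φ Φ' : Matrix r r α}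

def fotdCoeffField (L : Matrix n n α) (F : Matrix n d α) (U : Matrix n r α) (Y : Matrix d r α)
    (Φ : Matrix r r α) : Matrix d r α :=
  Y * (Uᵀ * L * U)ᵀ + Fᵀ * U + Y * Φ

theorem fotdCoeffField_gauge (hQ : Qᵀ * Q = 1) (hΦ : Φᵀ = -Φ) (hΦ' : Φ'ᵀ = -Φ') :
    fotdCoeffField L F (U * Qᵀ) (Y * Qᵀ) Φ' =
      fotdCoeffField L F U Y Φ * Qᵀ + Y * (Q * Φ - Φ' * Q)ᵀ := by
  rw [fotdCoeffField, fotdCoeffField, transpose_mul_mul_transpose]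
  simp only [transpose_sub, transpose_mul, transpose_transpose, hΦ, hΦ', Matrix.add_mul,
    Matrix.mul_sub, Matrix.neg_mul, Matrix.mul_neg, Matrix.mul_assoc,
    transpose_mul_cancel_left hQ]
  abel

variable [Fintype d] [DecidableEq n]

noncomputable def fotdModeField (L : Matrix n n α) (F : Matrix n d α) (U : Matrix n r α)
    (Y : Matrix d r α) (Φ : Matrix r r α) : Matrix n r α :=
  L * U - U * (Uᵀ * L * U) + (1 - U * Uᵀ) * F * Y * (Yᵀ * Y)⁻¹ + U * Φ

theorem fotdModeField_gauge (hQ : Qᵀ * Q = 1) (hΦ : Φᵀ = -Φ) (hΦ' : Φ'ᵀ = -Φ') :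
    fotdModeField L F (U * Qᵀ) (Y * Qᵀ) Φ' =
      fotdModeField L F U Y Φ * Qᵀ + U * (Q * Φ - Φ' * Q)ᵀ := by
  rw [fotdModeField, fotdModeField, transpose_mul_mul_transpose,
    transpose_mul_self_mul_transpose, inv_conj_transpose hQ,
    mul_transpose_mul_transpose_cancel hQ]
  simp only [transpose_sub, transpose_mul, hΦ, hΦ', Matrix.sub_mul, Matrix.add_mul,
    Matrix.mul_sub, Matrix.neg_mul, Matrix.mul_neg, Matrix.mul_assoc,
    transpose_mul_cancel_left hQ]
  abel

end Gauge

/-- Equivalence of f-OTD reductions (paper's Theorem 1, finite-dimensional form): if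
`(U, Y)` is an f-OTD reduction with gauge `Φ` and `R` is an orthogonal-matrix-valued
solution of `R' = R Φ - Φ̃ R` for a skew-symmetric `Φ̃`, then `(Ũ, Ỹ) = (U Rᵀ, Y Rᵀ)`
is an f-OTD reduction with gauge `Φ̃`; moreover `C̃ = ỸᵀỸ = R C Rᵀ` and the two
reductions yield identical low-rank approximations: `Ũ Ỹᵀ = U Yᵀ`. -/
theorem fOTD_equivalence {n r d : ℕ}
    (L : ℝ → Matrix (Fin n) (Fin n) ℝ) (F : ℝ → Matrix (Fin n) (Fin d) ℝ)
    (U : ℝ → Matrix (Fin n) (Fin r) ℝ) (Y : ℝ → Matrix (Fin d) (Fin r) ℝ)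
    (Φ : ℝ → Matrix (Fin r) (Fin r) ℝ)
    (hred : FOTDReduction L F U Y Φ)
    (Φt : ℝ → Matrix (Fin r) (Fin r) ℝ)
    (hΦt : ∀ t : ℝ, (Φt t)ᵀ = -Φt t)
    (R : ℝ → Matrix (Fin r) (Fin r) ℝ) (R' : ℝ → Matrix (Fin r) (Fin r) ℝ)
    (hR : ∀ (t : ℝ) (i j : Fin r), HasDerivAt (fun s => R s i j) (R' t i j) t)
    (hode : ∀ t : ℝ, R' t = R t * Φ t - Φt t * R t)
    (horth : ∀ t : ℝ, (R t)ᵀ * R t = 1 ∧ R t * (R t)ᵀ = 1) :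
    FOTDReduction L F (fun t => U t * (R t)ᵀ) (fun t => Y t * (R t)ᵀ) Φt ∧
      (∀ t : ℝ, (Y t * (R t)ᵀ)ᵀ * (Y t * (R t)ᵀ) = R t * ((Y t)ᵀ * Y t) * (R t)ᵀ) ∧
      (∀ t : ℝ, IsUnit (R t * ((Y t)ᵀ * Y t) * (R t)ᵀ).det) ∧
      (∀ t : ℝ, (U t * (R t)ᵀ) * (Y t * (R t)ᵀ)ᵀ = U t * (Y t)ᵀ) := by
  obtain ⟨hΦ, hC, hU, hY⟩ := hred
  have hRR (t : ℝ) : (R t)ᵀ * R t = 1 := (horth t).1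
  have hC' (t : ℝ) : (Y t * (R t)ᵀ)ᵀ * (Y t * (R t)ᵀ) = R t * ((Y t)ᵀ * Y t) * (R t)ᵀ :=
    transpose_mul_self_mul_transpose (Y t)
  have hunit (t : ℝ) : IsUnit (R t * ((Y t)ᵀ * Y t) * (R t)ᵀ).det := by
    rw [det_conj_transpose (hRR t)]
    exact hC t
  refine ⟨⟨hΦt, fun t => hC' t ▸ hunit t, fun t i j => ?_, fun t i j => ?_⟩, hC', hunit,
    fun t => mul_transpose_mul_transpose_cancel (hRR t) _ _⟩
  · have h := hasDerivAt_mul_transpose_apply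
      (A' := fotdModeField (L t) (F t) (U t) (Y t) (Φ t)) (hU t) (hR t) i j
    rw [hode t, ← fotdModeField_gauge (hRR t) (hΦ t) (hΦt t)] at h
    exact h
  · have h := hasDerivAt_mul_transpose_apply
      (A' := fotdCoeffField (L t) (F t) (U t) (Y t) (Φ t)) (hY t) (hR t) i j
    rw [hode t, ← fotdCoeffField_gauge (hRR t) (hΦ t) (hΦt t)] at h
    exact h
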